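/- arXiv:1510.01308 — 2 statements merged into one kernel-verified Lean document; each statement's English description precedes it below -/
import Mathlib

section
/- Under the same setup (free independent variables x_{m+1},…,x_n with means μ_i, constrained variables defined by parity constraints), for a free index k ∈ [m+1,n] and a constrained index l ∈ [1,m] with C_{lk} = 1, the pairwise marginal satisfies E[x_k x_l] = μ_k · (1 + (1-2b_l) ∏_{i=m+1, i≠k}^n (1 - 2C_{li} μ_i)) / 2. -/
/-- Embedding of `{0,1}`-valued booleans into the reals. -/
def Bval (a : Bool) : ℝ := if a then 1 else 0

lemma sum_prod_bool (r : ℕ) (f : Fin r → Bool → ℝ) :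
    ∑ x : Fin r → Bool, ∏ i, f i (x i) = ∏ i, ∑ a, f i a := by
  rw [Finset.prod_univ_sum, Fintype.piFinset_univ]

/-- With free independent binary variables `x_i` (means `μ_i`) and a
constrained variable `x_l` defined by `(1-2x_l) = (1-2b) ∏_i (1-2 C_i x_i)`, if `k`
is a free index with `C_k = 1` then
`E[x_k x_l] = μ_k (1 + (1-2b) ∏_{i ≠ k} (1 - 2 C_i μ_i)) / 2`. -/
theorem pairwise_marginal_free_constrained_dependent
    (r : ℕ) (C : Fin r → Bool) (b : Bool) (μ : Fin r → ℝ)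
    (hμ : ∀ i, 0 ≤ μ i ∧ μ i ≤ 1) (k : Fin r) (hk : C k = true) :
    ∑ x : Fin r → Bool, (∏ i, if x i then μ i else 1 - μ i) *
        (Bval (x k) *
          ((1 - (1 - 2 * Bval b) * ∏ i, (1 - 2 * Bval (C i) * Bval (x i))) / 2))
    = μ k * ((1 + (1 - 2 * Bval b) *
        ∏ i ∈ Finset.univ.erase k, (1 - 2 * Bval (C i) * μ i)) / 2) := by
  set cb : ℝ := 1 - 2 * Bval b with hcb
  set f1 : Fin r → Bool → ℝ :=
    fun i a => (if a then μ i else 1 - μ i) * (if i = k then Bval a else 1) with hf1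
  set f2 : Fin r → Bool → ℝ :=
    fun i a => f1 i a * (1 - 2 * Bval (C i) * Bval a) with hf2
  have hstep : ∀ x : Fin r → Bool,
      (∏ i, if x i then μ i else 1 - μ i) *
        (Bval (x k) *
          ((1 - cb * ∏ i, (1 - 2 * Bval (C i) * Bval (x i))) / 2))
      = (∏ i, f1 i (x i)) / 2 - cb * (∏ i, f2 i (x i)) / 2 := by
    intro x
    have h1 : (∏ i, f1 i (x i))
        = (∏ i, if x i then μ i else 1 - μ i) * Bval (x k) := by
      rw [hf1]
      simp only
      rw [Finset.prod_mul_distrib, Finset.prod_ite_eq' Finset.univ k fun i => Bval (x i)]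
      simp
    have h2 : (∏ i, f2 i (x i))
        = (∏ i, f1 i (x i)) * ∏ i, (1 - 2 * Bval (C i) * Bval (x i)) := by
      rw [hf2]
      simp only
      rw [Finset.prod_mul_distrib]
    rw [h2, h1]; ring
  rw [Finset.sum_congr rfl fun x _ => hstep x]
  rw [Finset.sum_sub_distrib]
  rw [← Finset.sum_div, ← Finset.sum_div, ← Finset.mul_sum]
  rw [sum_prod_bool r f1, sum_prod_bool r f2]
  have hs1 : (∏ i, ∑ a, f1 i a) = μ k := by
    rw [Finset.prod_eq_single k]
    · simp [hf1, Bval]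
    · intro i _ hik
      simp [hf1, hik, Bval]
    · simp
  have hs2k : (∑ a, f2 k a) = -μ k := by
    simp [hf2, hf1, hk, Bval]
    ring
  have hs2 : (∏ i, ∑ a, f2 i a)
      = (-μ k) * ∏ i ∈ Finset.univ.erase k, (1 - 2 * Bval (C i) * μ i) := by
    rw [← Finset.mul_prod_erase Finset.univ _ (Finset.mem_univ k), hs2k]
    congr 1
    refine Finset.prod_congr rfl fun i hi => ?_
    have hik : i ≠ k := Finset.ne_of_mem_erase hi
    simp [hf2, hf1, hik, Bval]
    split_ifs <;> ring
  rw [hs1, hs2]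
  ring
end

section
/- Under the same setup, for two constrained indices k, l ∈ [1,m], E[x_k x_l] = (1/4)(1 + (1-2b_k)(1-2b_l) ∏_{i=m+1}^n (1 - μ_i(2C_{ki} + 2C_{li} - 4C_{ki}C_{li})) - (1-2b_k)∏_{i=m+1}^n (1-2C_{ki}μ_i) - (1-2b_l)∏_{i=m+1}^n (1-2C_{li}μ_i)). -/
/-- With free independent binary variables `x_i` (means `μ_i`) and two
constrained variables `x_k, x_l` defined by
`(1-2x_k) = (1-2b_k) ∏_i (1-2 C_{ki} x_i)` and `(1-2x_l) = (1-2b_l) ∏_i (1-2 C_{li} x_i)`,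
`E[x_k x_l] = (1/4)(1 + (1-2b_k)(1-2b_l) ∏_i (1 - μ_i(2C_{ki}+2C_{li}-4C_{ki}C_{li}))`
`- (1-2b_k)∏_i(1-2C_{ki}μ_i) - (1-2b_l)∏_i(1-2C_{li}μ_i))`. -/
theorem pairwise_marginal_constrained_constrained
    (r : ℕ) (Ck Cl : Fin r → Bool) (bk bl : Bool) (μ : Fin r → ℝ)
    (hμ : ∀ i, 0 ≤ μ i ∧ μ i ≤ 1) :
    ∑ x : Fin r → Bool, (∏ i, if x i then μ i else 1 - μ i) *
        (((1 - (1 - 2 * Bval bk) * ∏ i, (1 - 2 * Bval (Ck i) * Bval (x i))) / 2) *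
         ((1 - (1 - 2 * Bval bl) * ∏ i, (1 - 2 * Bval (Cl i) * Bval (x i))) / 2))
    = (1 / 4) * (1
        + (1 - 2 * Bval bk) * (1 - 2 * Bval bl) *
            ∏ i, (1 - μ i * (2 * Bval (Ck i) + 2 * Bval (Cl i)
                              - 4 * Bval (Ck i) * Bval (Cl i)))
        - (1 - 2 * Bval bk) * ∏ i, (1 - 2 * Bval (Ck i) * μ i)
        - (1 - 2 * Bval bl) * ∏ i, (1 - 2 * Bval (Cl i) * μ i)) := by
  have key : ∀ (g : Fin r → Bool → ℝ),
      ∑ x : Fin r → Bool, ∏ i, g i (x i) = ∏ i, (g i true + g i false) := fun g => by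
    rw [← Fintype.prod_sum]
    exact Finset.prod_congr rfl fun i _ => Fintype.sum_bool _
  have e1 : ∑ x : Fin r → Bool, ∏ i, (if x i then μ i else 1 - μ i) = 1 := by
    rw [key (fun i b => if b then μ i else 1 - μ i)]; simp
  have e2 : ∑ x : Fin r → Bool,
      ∏ i, ((if x i then μ i else 1 - μ i) * (1 - 2 * Bval (Ck i) * Bval (x i)))
      = ∏ i, (1 - 2 * Bval (Ck i) * μ i) := by
    rw [key (fun i b => (if b then μ i else 1 - μ i) * (1 - 2 * Bval (Ck i) * Bval b))]
    exact Finset.prod_congr rfl fun i _ => by cases Ck i <;> simp [Bval] <;> ring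
  have e3 : ∑ x : Fin r → Bool,
      ∏ i, ((if x i then μ i else 1 - μ i) * (1 - 2 * Bval (Cl i) * Bval (x i)))
      = ∏ i, (1 - 2 * Bval (Cl i) * μ i) := by
    rw [key (fun i b => (if b then μ i else 1 - μ i) * (1 - 2 * Bval (Cl i) * Bval b))]
    exact Finset.prod_congr rfl fun i _ => by cases Cl i <;> simp [Bval] <;> ring
  have e4 : ∑ x : Fin r → Bool,
      ∏ i, ((if x i then μ i else 1 - μ i) * (1 - 2 * Bval (Ck i) * Bval (x i))
            * (1 - 2 * Bval (Cl i) * Bval (x i)))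
      = ∏ i, (1 - μ i * (2 * Bval (Ck i) + 2 * Bval (Cl i)
                              - 4 * Bval (Ck i) * Bval (Cl i))) := by
    rw [key (fun i b => (if b then μ i else 1 - μ i) * (1 - 2 * Bval (Ck i) * Bval b)
            * (1 - 2 * Bval (Cl i) * Bval b))]
    exact Finset.prod_congr rfl fun i _ => by
      cases Ck i <;> cases Cl i <;> simp [Bval] <;> ring
  have main : ∀ x : Fin r → Bool,
      (∏ i, if x i then μ i else 1 - μ i) *
        (((1 - (1 - 2 * Bval bk) * ∏ i, (1 - 2 * Bval (Ck i) * Bval (x i))) / 2) *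
         ((1 - (1 - 2 * Bval bl) * ∏ i, (1 - 2 * Bval (Cl i) * Bval (x i))) / 2))
      = (1 / 4) * ((∏ i, if x i then μ i else 1 - μ i)
          - (1 - 2 * Bval bk) *
              ∏ i, ((if x i then μ i else 1 - μ i) * (1 - 2 * Bval (Ck i) * Bval (x i)))
          - (1 - 2 * Bval bl) *
              ∏ i, ((if x i then μ i else 1 - μ i) * (1 - 2 * Bval (Cl i) * Bval (x i)))
          + (1 - 2 * Bval bk) * (1 - 2 * Bval bl) *
              ∏ i, ((if x i then μ i else 1 - μ i) * (1 - 2 * Bval (Ck i) * Bval (x i))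
                    * (1 - 2 * Bval (Cl i) * Bval (x i)))) := by
    intro x
    simp only [Finset.prod_mul_distrib]
    ring
  rw [Finset.sum_congr rfl fun x _ => main x]
  rw [← Finset.mul_sum]
  simp only [Finset.sum_add_distrib, Finset.sum_sub_distrib, ← Finset.mul_sum]
  rw [e1, e2, e3, e4]
  ring
end
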